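/- A bicomplex matrix A = A₁ + jA₂ ∈ 𝔹ℂ^{n×n} is hyperbolic positive if and only if both of its idempotent components 𝒜₁ = A₁ − iA₂ and 𝒜₂ = A₁ + iA₂ are positive semidefinite complex matrices. -/

import Mathlib

open Complex Matrix Kronecker BigOperators

open scoped ComplexOrder

/-- Bicomplex numbers, modeled as pairs `(z₁, z₂) ∈ ℂ × ℂ` representing `z₁ + j z₂`.
Addition is the componentwise (Prod) addition. -/
abbrev BC : Type := ℂ × ℂ

noncomputable section

/-- Bicomplex multiplication: `(z₁,z₂)·(w₁,w₂) = (z₁w₁ − z₂w₂, z₁w₂ + z₂w₁)`. -/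
def bcMul (z w : BC) : BC := (z.1 * w.1 - z.2 * w.2, z.1 * w.2 + z.2 * w.1)

/-- The `*`-conjugate `Z* = conj z₁ − j conj z₂`. -/
def bcStar (z : BC) : BC := ((starRingEnd ℂ) z.1, -((starRingEnd ℂ) z.2))

/-- First idempotent component `λ₁ = z₁ − i z₂`. -/
def idem1 (z : BC) : ℂ := z.1 - Complex.I * z.2

/-- Second idempotent component `λ₂ = z₁ + i z₂`. -/
def idem2 (z : BC) : ℂ := z.1 + Complex.I * z.2

/-- Membership in `𝔻⁺`: both idempotent components are nonnegative real numbers. -/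
def inDplus (z : BC) : Prop :=
  (idem1 z).im = 0 ∧ 0 ≤ (idem1 z).re ∧ (idem2 z).im = 0 ∧ 0 ≤ (idem2 z).re

/-- A bicomplex matrix `A = A₁ + j A₂` is a pair of complex matrices. -/
abbrev BCMat (I J : Type) : Type := Matrix I J ℂ × Matrix I J ℂ

/-- Bicomplex matrix multiplication, induced by bicomplex multiplication. -/
def bmul {I J K : Type} [Fintype J] (A : BCMat I J) (B : BCMat J K) : BCMat I K :=
  (A.1 * B.1 - A.2 * B.2, A.1 * B.2 + A.2 * B.1)

/-- `(A*)ᵗ`: the entrywise `*`-conjugate followed by transpose. -/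
def bcStarT {I J : Type} (A : BCMat I J) : BCMat J I := (A.1ᴴ, -(A.2ᴴ))

/-- The `(j,k)` entry of a bicomplex matrix, as a bicomplex number. -/
def bcEntry {I J : Type} (A : BCMat I J) (j : I) (k : J) : BC := (A.1 j k, A.2 j k)

/-- First idempotent component `𝒜₁ = A₁ − i A₂` of a bicomplex matrix. -/
def midem1 {I J : Type} (A : BCMat I J) : Matrix I J ℂ := A.1 - Complex.I • A.2

/-- Second idempotent component `𝒜₂ = A₁ + i A₂` of a bicomplex matrix. -/
def midem2 {I J : Type} (A : BCMat I J) : Matrix I J ℂ := A.1 + Complex.I • A.2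

/-- The bicomplex number `(c*)ᵗ · A · c`. -/
def quadForm {I : Type} [Fintype I] (A : BCMat I I) (c : I → BC) : BC :=
  ∑ j, ∑ k, bcMul (bcStar (c j)) (bcMul (bcEntry A j k) (c k))

/-- `A` is hyperbolic positive if `(c*)ᵗ · A · c ∈ 𝔻⁺` for every bicomplex vector `c`. -/
def HypPos {I : Type} [Fintype I] (A : BCMat I I) : Prop :=
  ∀ c : I → BC, inDplus (quadForm A c)

/-- Bicomplex trace `Tr(A) = Tr(A₁) + j Tr(A₂)`. -/
def bcTrace {I : Type} [Fintype I] (A : BCMat I I) : BC := (A.1.trace, A.2.trace)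

/-- The bicomplex tensor product
`A ⊗ⱼ B = (A₁⊗B₁ − A₂⊗B₂) + j (A₁⊗B₂ + A₂⊗B₁)`. -/
def bkron {I J K L : Type} (A : BCMat I J) (B : BCMat K L) : BCMat (I × K) (J × L) :=
  (A.1 ⊗ₖ B.1 - A.2 ⊗ₖ B.2, A.1 ⊗ₖ B.2 + A.2 ⊗ₖ B.1)

end

/-! The idempotent components `idem1`, `idem2` are additive, multiplicative and commute with the
`*`-conjugate, so the idempotent components of `(c*)ᵗ A c` are the Hermitian forms of `𝒜₁`, `𝒜₂`
evaluated at the idempotent components of `c`. Since every pair of complex vectors arises as the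
idempotent components of some bicomplex vector, hyperbolic positivity says exactly that both
Hermitian forms are nonnegative, and over `ℂ` this already forces the matrices to be Hermitian. -/

open scoped ComplexConjugate

theorem LinearMap.isPositive_iff_inner_nonneg_complex {E : Type*} [NormedAddCommGroup E]
    [InnerProductSpace ℂ E] (T : E →ₗ[ℂ] E) : T.IsPositive ↔ ∀ x, 0 ≤ inner ℂ (T x) x := by
  refine ⟨fun hT => hT.inner_nonneg_left, fun h => T.isPositive_iff.mpr ⟨?_, h⟩⟩
  exact T.isSymmetric_iff_inner_map_self_real.mpr fun x =>
    conj_eq_iff_im.mpr (nonneg_iff.mp (h x)).2.symm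

theorem Matrix.posSemidef_iff_forall_dotProduct_mulVec_nonneg {n : Type*} [Fintype n]
    [DecidableEq n] {M : Matrix n n ℂ} : M.PosSemidef ↔ ∀ x, 0 ≤ star x ⬝ᵥ (M *ᵥ x) := by
  rw [← isPositive_toEuclideanLin_iff, LinearMap.isPositive_iff_inner_nonneg_complex]
  refine (EuclideanSpace.equiv n ℂ).forall_congr fun x => ?_
  rw [EuclideanSpace.inner_eq_star_dotProduct, dotProduct_comm, ← star_star x.ofLp,
    star_dotProduct_star, star_nonneg_iff]
  rfl

lemma idem1_sum {ι : Type*} (s : Finset ι) (f : ι → BC) :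
    idem1 (∑ i ∈ s, f i) = ∑ i ∈ s, idem1 (f i) := by
  simp only [idem1, Prod.fst_sum, Prod.snd_sum, Finset.mul_sum, Finset.sum_sub_distrib]

lemma idem2_sum {ι : Type*} (s : Finset ι) (f : ι → BC) :
    idem2 (∑ i ∈ s, f i) = ∑ i ∈ s, idem2 (f i) := by
  simp only [idem2, Prod.fst_sum, Prod.snd_sum, Finset.mul_sum, Finset.sum_add_distrib]

lemma idem1_bcMul (z w : BC) : idem1 (bcMul z w) = idem1 z * idem1 w := by
  simp only [idem1, bcMul]
  linear_combination -(z.2 * w.2) * I_sq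

lemma idem2_bcMul (z w : BC) : idem2 (bcMul z w) = idem2 z * idem2 w := by
  simp only [idem2, bcMul]
  linear_combination -(z.2 * w.2) * I_sq

lemma idem1_bcStar (z : BC) : idem1 (bcStar z) = conj (idem1 z) := by
  simp only [idem1, bcStar, map_sub, map_mul, conj_I]
  ring

lemma idem2_bcStar (z : BC) : idem2 (bcStar z) = conj (idem2 z) := by
  simp only [idem2, bcStar, map_add, map_mul, conj_I]
  ring

lemma idem1_bcEntry {I J : Type} (A : BCMat I J) (j : I) (k : J) :
    idem1 (bcEntry A j k) = midem1 A j k := rfl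

lemma idem2_bcEntry {I J : Type} (A : BCMat I J) (j : I) (k : J) :
    idem2 (bcEntry A j k) = midem2 A j k := rfl

lemma idem1_quadForm {I : Type} [Fintype I] (A : BCMat I I) (c : I → BC) :
    idem1 (quadForm A c) = star (idem1 ∘ c) ⬝ᵥ (midem1 A *ᵥ (idem1 ∘ c)) := by
  simp only [quadForm, idem1_sum, idem1_bcMul, idem1_bcStar, idem1_bcEntry, dotProduct, mulVec,
    Finset.mul_sum, Pi.star_apply, Function.comp_apply, RCLike.star_def]

lemma idem2_quadForm {I : Type} [Fintype I] (A : BCMat I I) (c : I → BC) :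
    idem2 (quadForm A c) = star (idem2 ∘ c) ⬝ᵥ (midem2 A *ᵥ (idem2 ∘ c)) := by
  simp only [quadForm, idem2_sum, idem2_bcMul, idem2_bcStar, idem2_bcEntry, dotProduct, mulVec,
    Finset.mul_sum, Pi.star_apply, Function.comp_apply, RCLike.star_def]

lemma inDplus_iff (z : BC) : inDplus z ↔ 0 ≤ idem1 z ∧ 0 ≤ idem2 z := by
  simp only [inDplus, nonneg_iff, eq_comm (a := (0 : ℝ))]
  tauto

noncomputable def bcOfIdem (u v : ℂ) : BC := ((u + v) / 2, I * (u - v) / 2)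

@[simp]
lemma idem1_bcOfIdem (u v : ℂ) : idem1 (bcOfIdem u v) = u := by
  simp only [idem1, bcOfIdem]
  linear_combination (v - u) / 2 * I_sq

@[simp]
lemma idem2_bcOfIdem (u v : ℂ) : idem2 (bcOfIdem u v) = v := by
  simp only [idem2, bcOfIdem]
  linear_combination (u - v) / 2 * I_sq

/-- `A` is hyperbolic positive iff both idempotent components
`𝒜₁ = A₁ − iA₂` and `𝒜₂ = A₁ + iA₂` are positive semidefinite complex matrices. -/
theorem hypPos_iff_idem_posSemidef {n : ℕ} (A : BCMat (Fin n) (Fin n)) :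
    HypPos A ↔ (midem1 A).PosSemidef ∧ (midem2 A).PosSemidef := by
  simp only [HypPos, inDplus_iff, idem1_quadForm, idem2_quadForm,
    posSemidef_iff_forall_dotProduct_mulVec_nonneg]
  refine ⟨fun h => ⟨fun x => ?_, fun y => ?_⟩, fun ⟨h₁, h₂⟩ c => ⟨h₁ _, h₂ _⟩⟩
  · simpa [Function.comp_def] using (h fun j => bcOfIdem (x j) 0).1
  · simpa [Function.comp_def] using (h fun j => bcOfIdem 0 (y j)).2
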